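/- Let d ≥ 1, h > 0, and let χ, χ' : ℝ^d → {0,1} be measurable and Lebesgue integrable. Then ∫_{ℝ^d} |χ − χ'| dx ≤ ∫_{ℝ^d} (G_{h/2} ⋆ (χ − χ'))² dx + ∫_{ℝ^d} |χ − G_h ⋆ χ| dx + ∫_{ℝ^d} |χ' − G_h ⋆ χ'| dx. -/

import Mathlib

/-!
Put `u = χ - χ'`. It takes values in `{-1, 0, 1}`, so `|u| = u²` and
`∫ |u| = ∫ u (u - G_h ⋆ u) + ∫ u (G_h ⋆ u)`. As `|u| ≤ 1`, the first term is at most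
`∫ |u - G_h ⋆ u|`, and by linearity of convolution this is at most the sum of the corresponding
terms for `χ` and `χ'`. For the second term, the semigroup law `G_h = G_{h/2} ⋆ G_{h/2}`,
associativity of convolution and the evenness of `G_{h/2}` give
`∫ u (G_h ⋆ u) = ∫ (G_{h/2} ⋆ u) (G_{h/2} ⋆ u)`.
-/

open MeasureTheory

/-- The Gaussian heat kernel `G_h(z) = (2πh)^{-d/2} exp(-|z|²/(2h))` on `ℝ^d`. -/
noncomputable def gauss (d : ℕ) (h : ℝ) (z : EuclideanSpace ℝ (Fin d)) : ℝ :=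
  (2 * Real.pi * h) ^ (-(d : ℝ) / 2) * Real.exp (-‖z‖ ^ 2 / (2 * h))

/-- Convolution of two functions on `ℝ^d` w.r.t. Lebesgue measure. -/
noncomputable def conv (d : ℕ) (f g : EuclideanSpace ℝ (Fin d) → ℝ)
    (x : EuclideanSpace ℝ (Fin d)) : ℝ :=
  ∫ y, f (x - y) * g y

open Real

lemma abs_le_one_of_abs_eq_sq {a : ℝ} (ha : |a| = a ^ 2) : |a| ≤ 1 := by
  nlinarith [abs_nonneg a, sq_abs a]

lemma integral_abs_le_integral_abs_sub_add {α : Type*} [MeasurableSpace α] {μ : Measure α}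
    {u w : α → ℝ} (hu : Integrable u μ) (hu_sq : ∀ x, |u x| = u x ^ 2) (hw : Integrable w μ) :
    ∫ x, |u x| ∂μ ≤ ∫ x, |u x - w x| ∂μ + ∫ x, u x * w x ∂μ := by
  have hu_bd : ∀ᵐ x ∂μ, ‖u x‖ ≤ 1 := ae_of_all _ fun x => abs_le_one_of_abs_eq_sq (hu_sq x)
  have h1 : Integrable (fun x => u x * (u x - w x)) μ :=
    (hu.sub hw).bdd_mul hu.aestronglyMeasurable hu_bd
  have h2 : Integrable (fun x => u x * w x) μ := hw.bdd_mul hu.aestronglyMeasurable hu_bd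
  have h3 : Integrable (fun x => |u x - w x|) μ := (hu.sub hw).abs
  calc ∫ x, |u x| ∂μ = ∫ x, u x * (u x - w x) + u x * w x ∂μ := by
        congr 1; funext x; rw [hu_sq]; ring
    _ = ∫ x, u x * (u x - w x) ∂μ + ∫ x, u x * w x ∂μ := integral_add h1 h2
    _ ≤ ∫ x, |u x - w x| ∂μ + ∫ x, u x * w x ∂μ := by
        refine add_le_add_left (integral_mono h1 h3 fun x => (le_abs_self _).trans ?_) _
        rw [abs_mul]
        exact mul_le_of_le_one_left (abs_nonneg _) (abs_le_one_of_abs_eq_sq (hu_sq x))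

lemma norm_sub_sq_div_add_norm_sq_div {V : Type*} [NormedAddCommGroup V] [InnerProductSpace ℝ V]
    {s t : ℝ} (hs : 0 < s) (ht : 0 < t) (w z : V) :
    ‖w - z‖ ^ 2 / (2 * s) + ‖z‖ ^ 2 / (2 * t)
      = (s + t) / (2 * s * t) * ‖z - (t / (s + t)) • w‖ ^ 2 + ‖w‖ ^ 2 / (2 * (s + t)) := by
  rw [norm_sub_sq_real, norm_sub_sq_real, inner_smul_right, norm_smul, real_inner_comm,
    Real.norm_of_nonneg (by positivity : 0 ≤ t / (s + t))]
  field_simp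
  ring

section Gauss

variable {d : ℕ} {t : ℝ}

local notation "E" => EuclideanSpace ℝ (Fin d)

lemma gauss_nonneg (ht : 0 < t) (z : E) : 0 ≤ gauss d t z := by
  unfold gauss
  positivity

lemma norm_gauss_le (ht : 0 < t) (z : E) : ‖gauss d t z‖ ≤ (2 * π * t) ^ (-(d : ℝ) / 2) := by
  rw [Real.norm_of_nonneg (gauss_nonneg ht z), gauss]
  refine mul_le_of_le_one_right (by positivity) (Real.exp_le_one_iff.mpr ?_)
  rw [neg_div]
  exact neg_nonpos.mpr (by positivity)

lemma continuous_gauss : Continuous (gauss d t) := by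
  unfold gauss
  fun_prop

lemma gauss_neg (z : E) : gauss d t (-z) = gauss d t z := by
  simp [gauss]

lemma gauss_eq_mul_exp (z : E) :
    gauss d t z = (2 * π * t) ^ (-(d : ℝ) / 2) * rexp (-(2 * t)⁻¹ * ‖z‖ ^ 2) := by
  rw [gauss]
  congr 2
  ring

lemma integrable_gauss (ht : 0 < t) : Integrable (gauss d t) := by
  have hb : 0 < (2 * t)⁻¹ := by positivity
  have hexp : Integrable fun z : E => rexp (-(2 * t)⁻¹ * ‖z‖ ^ 2) := by
    refine Integrable.of_integral_ne_zero ?_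
    rw [GaussianFourier.integral_rexp_neg_mul_sq_norm hb]
    positivity
  rw [show gauss d t = _ from funext gauss_eq_mul_exp]
  exact hexp.const_mul _

-- `(π / b) ^ (d / 2)` with `b = (s + t) / (2st)` is the Gaussian integral left after completing
-- the square in `conv_gauss_gauss`.
lemma gauss_normalization_mul {s : ℝ} (hs : 0 < s) (ht : 0 < t) :
    (2 * π * s) ^ (-(d : ℝ) / 2) * (2 * π * t) ^ (-(d : ℝ) / 2)
        * (π / ((s + t) / (2 * s * t))) ^ ((d : ℝ) / 2)
      = (2 * π * (s + t)) ^ (-(d : ℝ) / 2) := by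
  have hquot : π / ((s + t) / (2 * s * t)) = (2 * π * s) * (2 * π * t) / (2 * π * (s + t)) := by
    field_simp
  have hP : 0 < 2 * π * s := by positivity
  have hQ : 0 < 2 * π * t := by positivity
  have hR : 0 < 2 * π * (s + t) := by positivity
  rw [hquot]
  generalize 2 * π * s = P at hP ⊢
  generalize 2 * π * t = Q at hQ ⊢
  generalize 2 * π * (s + t) = R at hR ⊢
  rw [neg_div, Real.rpow_neg hP.le, Real.rpow_neg hQ.le, Real.rpow_neg hR.le,
    Real.div_rpow (by positivity) hR.le, Real.mul_rpow hP.le hQ.le]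
  have hP' : P ^ ((d : ℝ) / 2) ≠ 0 := by positivity
  have hQ' : Q ^ ((d : ℝ) / 2) ≠ 0 := by positivity
  field_simp

lemma conv_gauss_gauss {s : ℝ} (hs : 0 < s) (ht : 0 < t) :
    conv d (gauss d s) (gauss d t) = gauss d (s + t) := by
  funext w
  have hb : 0 < (s + t) / (2 * s * t) := by positivity
  have hexp : ∀ z : E, gauss d s (w - z) * gauss d t z
      = (2 * π * s) ^ (-(d : ℝ) / 2) * (2 * π * t) ^ (-(d : ℝ) / 2)
          * rexp (-‖w‖ ^ 2 / (2 * (s + t)))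
          * rexp (-((s + t) / (2 * s * t)) * ‖z - (t / (s + t)) • w‖ ^ 2) := by
    intro z
    have hsum : -‖w - z‖ ^ 2 / (2 * s) + -‖z‖ ^ 2 / (2 * t)
        = -‖w‖ ^ 2 / (2 * (s + t)) + -((s + t) / (2 * s * t)) * ‖z - (t / (s + t)) • w‖ ^ 2 := by
      simp only [neg_div, neg_mul]
      linarith [norm_sub_sq_div_add_norm_sq_div hs ht w z]
    rw [gauss, gauss, mul_mul_mul_comm, ← Real.exp_add, hsum, Real.exp_add]
    ring
  simp only [conv, hexp, integral_const_mul]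
  rw [integral_sub_right_eq_self (fun z : E => rexp (-((s + t) / (2 * s * t)) * ‖z‖ ^ 2)),
    GaussianFourier.integral_rexp_neg_mul_sq_norm hb, finrank_euclideanSpace_fin,
    mul_right_comm, gauss_normalization_mul hs ht, gauss]

end Gauss

section Conv

variable {d : ℕ}

local notation "E" => EuclideanSpace ℝ (Fin d)

open ContinuousLinearMap Convolution

lemma conv_eq_convolution (f g : E → ℝ) : conv d f g = g ⋆[mul ℝ ℝ] f := by
  funext x
  simp only [conv, convolution, mul_apply', mul_comm]

lemma integrable_conv {f g : E → ℝ} (hf : Integrable f) (hg : Integrable g) :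
    Integrable (conv d f g) := by
  rw [conv_eq_convolution]
  exact hg.integrable_convolution _ hf

lemma conv_sub_ae_eq {K f g : E → ℝ} (hK : Integrable K) (hf : Integrable f) (hg : Integrable g) :
    conv d K (fun y => f y - g y) =ᵐ[volume] fun x => conv d K f x - conv d K g x := by
  filter_upwards [hf.ae_convolution_exists (mul ℝ ℝ) hK, hg.ae_convolution_exists (mul ℝ ℝ) hK]
    with x hfx hgx
  simp only [conv_eq_convolution, convolution_def, mul_apply', sub_mul]
  exact integral_sub hfx hgx

lemma conv_assoc {K L u : E → ℝ} {C : ℝ} (hK : Continuous K) (hK_bd : ∀ z, ‖K z‖ ≤ C)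
    (hL : Integrable L) (hu : Integrable u) (x : E) :
    conv d (conv d K L) u x = conv d K (conv d L u) x := by
  simp only [conv_eq_convolution]
  have hi : Integrable (fun p : E × E => K (x - p.1) * (u p.2 * L (p.1 - p.2)))
      (volume.prod volume) :=
    (hu.convolution_integrand (mul ℝ ℝ) hL).bdd_mul
      (hK.comp (continuous_const.sub continuous_fst)).aestronglyMeasurable
      (ae_of_all _ fun p => hK_bd _)
  refine (convolution_assoc' (mul ℝ ℝ) (mul ℝ ℝ) (mul ℝ ℝ) (mul ℝ ℝ) (fun a b c => mul_assoc a b c)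
    (hu.ae_convolution_exists _ hL) (ae_of_all _ fun y => ?_) ?_).symm
  · exact hL.mul_bdd (hK.comp (continuous_const.sub continuous_id)).aestronglyMeasurable
      (ae_of_all _ fun z => hK_bd _)
  · refine hi.congr (ae_of_all _ fun p => ?_)
    simp only [Function.uncurry, mul_apply']
    ring

lemma integral_mul_conv_of_neg_eq {K u v : E → ℝ} {C : ℝ} (hK_neg : ∀ z, K (-z) = K z)
    (hK : Integrable K) (hu : AEStronglyMeasurable u) (hu_bd : ∀ᵐ x, ‖u x‖ ≤ C)
    (hv : Integrable v) :
    ∫ x, u x * conv d K v x = ∫ z, conv d K u z * v z := by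
  have hprod : Integrable (fun p : E × E => u p.1 * (v p.2 * K (p.1 - p.2)))
      (volume.prod volume) :=
    (hv.convolution_integrand (mul ℝ ℝ) hK).bdd_mul hu.comp_fst
      (Measure.quasiMeasurePreserving_fst.ae hu_bd)
  calc ∫ x, u x * conv d K v x = ∫ x, ∫ z, u x * (v z * K (x - z)) := by
        simp only [conv, ← integral_const_mul, mul_comm (v _)]
    _ = ∫ z, ∫ x, u x * (v z * K (x - z)) := integral_integral_swap hprod
    _ = ∫ z, conv d K u z * v z := by
        simp only [conv, ← integral_mul_const]
        congr 1; funext z; congr 1; funext x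
        rw [← hK_neg, neg_sub]
        ring

lemma integral_mul_conv_conv_self {K u : E → ℝ} {C D : ℝ} (hK_cont : Continuous K)
    (hK_bd : ∀ z, ‖K z‖ ≤ C) (hK_neg : ∀ z, K (-z) = K z) (hK : Integrable K)
    (hu : Integrable u) (hu_bd : ∀ᵐ x, ‖u x‖ ≤ D) :
    ∫ x, u x * conv d (conv d K K) u x = ∫ x, conv d K u x ^ 2 := by
  simp only [conv_assoc hK_cont hK_bd hK hu, sq]
  exact integral_mul_conv_of_neg_eq hK_neg hK hu.aestronglyMeasurable hu_bd (integrable_conv hK hu)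

lemma integral_abs_sub_conv_sub_le {K f g : E → ℝ} (hK : Integrable K) (hf : Integrable f)
    (hg : Integrable g) :
    ∫ x, |f x - g x - conv d K (fun y => f y - g y) x|
      ≤ (∫ x, |f x - conv d K f x|) + ∫ x, |g x - conv d K g x| := by
  have hf' : Integrable (fun x => |f x - conv d K f x|) := (hf.sub (integrable_conv hK hf)).abs
  have hg' : Integrable (fun x => |g x - conv d K g x|) := (hg.sub (integrable_conv hK hg)).abs
  rw [← integral_add hf' hg']
  refine integral_mono_ae ((hf.sub hg).sub (integrable_conv hK (hf.sub hg))).abs (hf'.add hg') ?_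
  filter_upwards [conv_sub_ae_eq hK hf hg] with x hx
  rw [hx]
  exact (abs_sub _ _).trans_eq' (by ring_nf)

lemma integral_mul_conv_gauss {t : ℝ} (ht : 0 < t) {u : E → ℝ} {C : ℝ} (hu : Integrable u)
    (hu_bd : ∀ᵐ x, ‖u x‖ ≤ C) :
    ∫ x, u x * conv d (gauss d (t + t)) u x = ∫ x, conv d (gauss d t) u x ^ 2 := by
  rw [← conv_gauss_gauss ht ht]
  exact integral_mul_conv_conv_self continuous_gauss (norm_gauss_le ht) gauss_neg
    (integrable_gauss ht) hu hu_bd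

end Conv

theorem stmt_14_general (d : ℕ) (h : ℝ) (hh : 0 < h)
    (χ χ' : EuclideanSpace ℝ (Fin d) → ℝ)
    (hχ_val : ∀ x, χ x = 0 ∨ χ x = 1) (hχ'_val : ∀ x, χ' x = 0 ∨ χ' x = 1)
    (hχ_int : Integrable χ) (hχ'_int : Integrable χ') :
    ∫ x, |χ x - χ' x|
      ≤ (∫ x, (conv d (gauss d (h / 2)) (fun y => χ y - χ' y) x) ^ 2)
        + (∫ x, |χ x - conv d (gauss d h) χ x|)
        + ∫ x, |χ' x - conv d (gauss d h) χ' x| := by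
  have hu : Integrable fun y => χ y - χ' y := hχ_int.sub hχ'_int
  have hu_sq : ∀ x, |χ x - χ' x| = (χ x - χ' x) ^ 2 := fun x => by
    rcases hχ_val x with h1 | h1 <;> rcases hχ'_val x with h2 | h2 <;> simp [h1, h2]
  have hquad : ∫ x, (χ x - χ' x) * conv d (gauss d h) (fun y => χ y - χ' y) x
      = ∫ x, conv d (gauss d (h / 2)) (fun y => χ y - χ' y) x ^ 2 := by
    rw [← integral_mul_conv_gauss (half_pos hh) hu
      (ae_of_all _ fun x => abs_le_one_of_abs_eq_sq (hu_sq x)), add_halves]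
  have hsplit : ∫ x, |χ x - χ' x|
      ≤ (∫ x, |χ x - χ' x - conv d (gauss d h) (fun y => χ y - χ' y) x|)
        + ∫ x, (χ x - χ' x) * conv d (gauss d h) (fun y => χ y - χ' y) x :=
    integral_abs_le_integral_abs_sub_add hu hu_sq (integrable_conv (integrable_gauss hh) hu)
  linarith [integral_abs_sub_conv_sub_le (integrable_gauss hh) hχ_int hχ'_int]

theorem stmt_14 (d : ℕ) (hd : 1 ≤ d) (h : ℝ) (hh : 0 < h)
    (χ χ' : EuclideanSpace ℝ (Fin d) → ℝ)
    (hχ_meas : Measurable χ) (hχ'_meas : Measurable χ')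
    (hχ_val : ∀ x, χ x = 0 ∨ χ x = 1) (hχ'_val : ∀ x, χ' x = 0 ∨ χ' x = 1)
    (hχ_int : Integrable χ) (hχ'_int : Integrable χ') :
    ∫ x, |χ x - χ' x|
      ≤ (∫ x, (conv d (gauss d (h / 2)) (fun y => χ y - χ' y) x) ^ 2)
        + (∫ x, |χ x - conv d (gauss d h) χ x|)
        + ∫ x, |χ' x - conv d (gauss d h) χ' x| :=
  stmt_14_general d h hh χ χ' hχ_val hχ'_val hχ_int hχ'_int
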